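/- arXiv:2209.14618 — 2 statements merged into one kernel-verified Lean document; each statement's English description precedes it below -/
import Mathlib

section
/- Let α_1,…,α_d > 0 and let p_π be the Bayesian predictive distribution based on the gamma prior π(λ) = ∏_{i=1}^d λ_i^{β_i−1} e^{−α_iλ_i}, which equals p_π(y|x) = ∏_{i=1}^d ((r+α_i)/(r+s+α_i))^{x_i+β_i} (s/(r+s+α_i))^{y_i} Γ(x_i+y_i+β_i)/(Γ(x_i+β_i) y_i!). Then the Kullback–Leibler risk of p_π has no upper bound: for every M > 0 there exists λ ∈ (0,∞)^d such that the K-L risk of p_π at λ exceeds M. -/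
open MeasureTheory Real Filter

noncomputable section

/-- The positive orthant `(0,∞)^d`. -/
def posOrthant (d : ℕ) : Set (Fin d → ℝ) := {lam | ∀ i, 0 < lam i}

/-- Poisson probability mass function with mean `μ`. -/
noncomputable def poissonPMF (μ : ℝ) (k : ℕ) : ℝ :=
  Real.exp (-μ) * μ ^ k / (Nat.factorial k)

/-- Joint pmf of independent Poisson components with means `rate i * lam i`. -/
noncomputable def prodPoisson {d : ℕ} (rate lam : Fin d → ℝ) (x : Fin d → ℕ) : ℝ :=
  ∏ i, poissonPMF (rate i * lam i) (x i)

/-- Kullback–Leibler risk of a predictive distribution `q` at parameter `lam`. -/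
noncomputable def klRisk {d : ℕ} (rx ry lam : Fin d → ℝ)
    (q : (Fin d → ℕ) → (Fin d → ℕ) → ℝ) : ℝ :=
  ∑' x : Fin d → ℕ, prodPoisson rx lam x *
    ∑' y : Fin d → ℕ, prodPoisson ry lam y * Real.log (prodPoisson ry lam y / q x y)

/-- The Bayesian predictive distribution based on the gamma prior
`π(λ) = ∏ λ_i^{β_i-1} e^{-α_i λ_i}`, in closed form. -/
noncomputable def gammaPred {d : ℕ} (r s : ℝ) (β αg : Fin d → ℝ) (x y : Fin d → ℕ) : ℝ :=
  ∏ i, ((r + αg i) / (r + s + αg i)) ^ ((x i : ℝ) + β i) *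
    (s / (r + s + αg i)) ^ (y i) *
    (Real.Gamma ((x i : ℝ) + (y i : ℝ) + β i) /
      (Real.Gamma ((x i : ℝ) + β i) * (Nat.factorial (y i))))

/-! With all coordinates of `λ` equal to `Λ`, the K-L risk of a product predictive distribution
is the sum of the one-dimensional risks. In one coordinate, `log (p(y|λ) / p_π(y|x))` is explicit
up to the log-Gamma increment
`log Γ(x+y+β) - log Γ(x+β) ≤ z log z - (x+β) log (x+β) - y`, where `z = x+y+β`.
Bounding `z log z` and `-(x+β) log (x+β)` by tangent lines turns this into quadratics in `x`
and `y`, whose Poisson means are explicit. The resulting lower bound on the risk grows like `κ Λ`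
with `κ = (r+s) log (r+s+α) - r log (r+α) - (r+s) log (r+s) + r log r`, which is positive
because `α ↦ (r+s) log (r+s+α) - r log (r+α)` is strictly increasing. -/

theorem mul_log_le_mul_log_add_sq_div_sub {z u : ℝ} (hz : 0 < z) (hu : 0 < u) :
    z * log z ≤ z * log u + z ^ 2 / u - z := by
  have h := log_le_sub_one_of_pos (div_pos hz hu)
  rw [log_div hz.ne' hu.ne'] at h
  have h' := mul_le_mul_of_nonneg_left h hz.le
  field_simp at h' ⊢
  linarith

theorem mul_log_add_mul_sub_le_mul_log {v z : ℝ} (hv : 0 < v) (hz : 0 < z) :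
    v * log v + (1 + log v) * (z - v) ≤ z * log z := by
  have h := self_sub_one_le_mul_log (div_pos hz hv).le
  rw [log_div hz.ne' hv.ne'] at h
  have h' := mul_le_mul_of_nonneg_left h hv.le
  field_simp at h'
  linarith

theorem log_Gamma_add_one {x : ℝ} (hx : 0 < x) :
    log (Gamma (x + 1)) = log (Gamma x) + log x := by
  rw [Gamma_add_one hx.ne', log_mul hx.ne' (Gamma_pos_of_pos hx).ne', add_comm]

theorem natCast_mul_log_le_log_Gamma_add_sub {a : ℝ} (ha : 0 < a) (k : ℕ) :
    k * log a ≤ log (Gamma (a + k)) - log (Gamma a) := by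
  induction k with
  | zero => simp
  | succ k ih =>
    rw [Nat.cast_succ, ← add_assoc, log_Gamma_add_one (by positivity)]
    have := log_le_log ha (le_add_of_nonneg_right k.cast_nonneg)
    linarith

theorem log_Gamma_add_natCast_sub_le {a : ℝ} (ha : 0 < a) (k : ℕ) :
    log (Gamma (a + k)) - log (Gamma a) ≤ (a + k) * log (a + k) - a * log a - k := by
  induction k with
  | zero => simp
  | succ k ih =>
    have hak : 0 < a + k := by positivity
    rw [Nat.cast_succ, ← add_assoc, log_Gamma_add_one hak]
    have := mul_log_add_mul_sub_le_mul_log hak (by positivity : 0 < a + k + 1)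
    linarith

theorem log_Gamma_add_natCast_sub_le_quadratic {a u : ℝ} (ha : 0 < a) (hu : 0 < u) (k : ℕ) :
    log (Gamma (a + k)) - log (Gamma a) ≤
      (a - a * log a) + (log u - 2) * (k + a) + u⁻¹ * (k + a) ^ 2 := by
  have h1 := log_Gamma_add_natCast_sub_le ha k
  have h2 := mul_log_le_mul_log_add_sq_div_sub (by positivity : 0 < a + k) hu
  have e : (a + k) ^ 2 / u = u⁻¹ * (k + a) ^ 2 := by ring
  linarith

theorem Summable.mul_of_le_of_le {ι : Type*} {p f g h : ι → ℝ} (hp : ∀ k, 0 ≤ p k)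
    (hg : Summable fun k => p k * g k) (hh : Summable fun k => p k * h k)
    (hgf : ∀ k, g k ≤ f k) (hfh : ∀ k, f k ≤ h k) : Summable fun k => p k * f k := by
  have hdiff : Summable fun k => p k * (f k - g k) :=
    (hh.sub hg).of_nonneg_of_le (fun k => mul_nonneg (hp k) (sub_nonneg.2 (hgf k)))
      (fun k => by rw [← mul_sub]; exact mul_le_mul_of_nonneg_left (by linarith [hfh k]) (hp k))
  simpa [mul_sub] using hdiff.add hg

theorem poissonPMF_nonneg {μ : ℝ} (hμ : 0 ≤ μ) (k : ℕ) : 0 ≤ poissonPMF μ k := by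
  unfold poissonPMF; positivity

theorem poissonPMF_pos {μ : ℝ} (hμ : 0 < μ) (k : ℕ) : 0 < poissonPMF μ k := by
  unfold poissonPMF; positivity

theorem hasSum_poissonPMF (μ : ℝ) : HasSum (poissonPMF μ) 1 := by
  have h := (NormedSpace.expSeries_div_hasSum_exp μ).mul_left (exp (-μ))
  rw [← Real.exp_eq_exp_ℝ, ← Real.exp_add, neg_add_cancel, Real.exp_zero] at h
  exact h.congr_fun fun k => by simp only [poissonPMF, mul_div_assoc]

theorem poissonPMF_succ_mul (μ : ℝ) (k : ℕ) :
    poissonPMF μ (k + 1) * (k + 1 : ℕ) = μ * poissonPMF μ k := by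
  simp only [poissonPMF, Nat.factorial_succ, Nat.cast_mul, pow_succ]
  field_simp

theorem hasSum_poissonPMF_mul_natCast_mul {μ a : ℝ} {f : ℕ → ℝ}
    (hf : HasSum (fun k => poissonPMF μ k * f (k + 1)) a) :
    HasSum (fun k : ℕ => poissonPMF μ k * (k * f k)) (μ * a) := by
  refine (hasSum_nat_add_iff' 1).mp ?_
  simp only [Finset.range_one, Finset.sum_singleton, CharP.cast_eq_zero, zero_mul, mul_zero,
    sub_zero]
  refine (hf.mul_left μ).congr_fun fun k => ?_
  rw [← mul_assoc, ← mul_assoc, poissonPMF_succ_mul]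

theorem hasSum_poissonPMF_mul_quadratic (μ β a b c : ℝ) :
    HasSum (fun k : ℕ => poissonPMF μ k * (a + b * (k + β) + c * (k + β) ^ 2))
      (a + b * (μ + β) + c * ((μ + β) ^ 2 + μ)) := by
  have h0 := hasSum_poissonPMF μ
  have h1 : HasSum (fun k : ℕ => poissonPMF μ k * (k * 1)) (μ * 1) :=
    hasSum_poissonPMF_mul_natCast_mul (by simpa using h0)
  have h2 : HasSum (fun k : ℕ => poissonPMF μ k * (k * k)) (μ * (μ + 1)) := by
    refine hasSum_poissonPMF_mul_natCast_mul ?_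
    simpa [mul_add] using h1.add h0
  rw [show a + b * (μ + β) + c * ((μ + β) ^ 2 + μ)
    = (a + b * β + c * β ^ 2) * 1 + (b + 2 * c * β) * (μ * 1) + c * (μ * (μ + 1)) by ring]
  exact (((h0.mul_left _).add (h1.mul_left _)).add (h2.mul_left c)).congr_fun fun k => by ring

def logGammaRatioMean (m a : ℝ) : ℝ :=
  ∑' k : ℕ, poissonPMF m k * (log (Gamma (a + k)) - log (Gamma a))

section logGammaRatioMean

variable {m n a b u : ℝ}

theorem summable_poissonPMF_mul_log_Gamma_sub (hm : 0 ≤ m) (ha : 0 < a) :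
    Summable fun k : ℕ => poissonPMF m k * (log (Gamma (a + k)) - log (Gamma a)) :=
  Summable.mul_of_le_of_le (poissonPMF_nonneg hm)
    ((hasSum_poissonPMF_mul_quadratic m 0 0 (log a) 0).summable.congr fun k => by ring)
    (hasSum_poissonPMF_mul_quadratic m a (a - a * log a) (log 1 - 2) 1⁻¹).summable
    (natCast_mul_log_le_log_Gamma_add_sub ha)
    (log_Gamma_add_natCast_sub_le_quadratic ha one_pos)

theorem mul_log_le_logGammaRatioMean (hm : 0 ≤ m) (ha : 0 < a) :
    m * log a ≤ logGammaRatioMean m a := by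
  have hlin : HasSum (fun k : ℕ => poissonPMF m k * (k * log a)) (m * log a) := by
    simpa using hasSum_poissonPMF_mul_natCast_mul (f := fun _ => log a)
      ((hasSum_poissonPMF m).mul_right (log a))
  exact hasSum_le (fun k => mul_le_mul_of_nonneg_left
      (natCast_mul_log_le_log_Gamma_add_sub ha k) (poissonPMF_nonneg hm k))
    hlin (summable_poissonPMF_mul_log_Gamma_sub hm ha).hasSum

theorem logGammaRatioMean_le (hm : 0 ≤ m) (ha : 0 < a) (hu : 0 < u) :
    logGammaRatioMean m a ≤
      (a - a * log a) + (log u - 2) * (m + a) + u⁻¹ * ((m + a) ^ 2 + m) :=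
  hasSum_le (fun k => mul_le_mul_of_nonneg_left
      (log_Gamma_add_natCast_sub_le_quadratic ha hu k) (poissonPMF_nonneg hm k))
    (summable_poissonPMF_mul_log_Gamma_sub hm ha).hasSum
    (hasSum_poissonPMF_mul_quadratic m a _ _ _)

/-- `logGammaRatioMean_le` at `u = n + b + m`, with `a log a` bounded below by its tangent line
at `n + b`. -/
theorem logGammaRatioMean_add_le_quadratic (hn : 0 ≤ n) (hm : 0 ≤ m) (hb : 0 < b) (t : ℕ) :
    logGammaRatioMean m (t + b) ≤
      (n + b + m * log (n + b) + m / (n + b + m)) +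
        (log (n + b + m) - log (n + b) - 2) * (t + (b + m)) +
        (n + b + m)⁻¹ * (t + (b + m)) ^ 2 := by
  have h1 := logGammaRatioMean_le hm (by positivity : 0 < (t : ℝ) + b)
    (by positivity : 0 < n + b + m)
  have h2 := mul_log_add_mul_sub_le_mul_log (by positivity : 0 < n + b)
    (by positivity : 0 < (t : ℝ) + b)
  have e : m / (n + b + m) = (n + b + m)⁻¹ * m := by ring
  linarith

theorem summable_poissonPMF_mul_logGammaRatioMean (hn : 0 ≤ n) (hm : 0 ≤ m) (hb : 0 < b) :
    Summable fun t : ℕ => poissonPMF n t * logGammaRatioMean m (t + b) :=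
  Summable.mul_of_le_of_le (poissonPMF_nonneg hn)
    ((hasSum_poissonPMF n).mul_right (m * log b)).summable
    (hasSum_poissonPMF_mul_quadratic n (b + m) _ _ _).summable
    (fun t => by
      have := mul_log_le_logGammaRatioMean hm (by positivity : 0 < (t : ℝ) + b)
      have := mul_le_mul_of_nonneg_left
        (log_le_log hb (le_add_of_nonneg_left t.cast_nonneg)) hm
      linarith)
    (logGammaRatioMean_add_le_quadratic hn hm hb)

theorem tsum_poissonPMF_mul_logGammaRatioMean_le (hn : 0 ≤ n) (hm : 0 ≤ m) (hb : 0 < b) :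
    ∑' t : ℕ, poissonPMF n t * logGammaRatioMean m (t + b) ≤
      (n + b + m) * log (n + b + m) - (n + b) * log (n + b) - m + (n + m) / (n + b + m) := by
  have h := hasSum_le (fun t => mul_le_mul_of_nonneg_left
      (logGammaRatioMean_add_le_quadratic hn hm hb t) (poissonPMF_nonneg hn t))
    (summable_poissonPMF_mul_logGammaRatioMean hn hm hb).hasSum
    (hasSum_poissonPMF_mul_quadratic n (b + m) _ _ _)
  have hu : n + b + m ≠ 0 := by positivity
  refine h.trans_eq ?_
  field_simp
  ring

end logGammaRatioMean

theorem summable_norm_prod_apply {α R : Type*} [NormedCommRing R] :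
    ∀ {d : ℕ} {f : Fin d → α → R}, (∀ i, Summable fun k => ‖f i k‖) →
      Summable fun x : Fin d → α => ‖∏ i, f i (x i)‖
  | 0, _, _ => Summable.of_finite
  | d + 1, f, hf => by
    refine (Fin.consEquiv fun _ => α).summable_iff.mp ?_
    simpa [Function.comp_def, Fin.prod_univ_succ] using
      (hf 0).mul_norm (summable_norm_prod_apply fun i => hf i.succ)

theorem tsum_prod_apply_eq_prod_tsum {α R : Type*} [NormedCommRing R] [CompleteSpace R] :
    ∀ {d : ℕ} {f : Fin d → α → R}, (∀ i, Summable fun k => ‖f i k‖) →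
      ∑' x : Fin d → α, ∏ i, f i (x i) = ∏ i, ∑' k, f i k
  | 0, _, _ => by simp
  | d + 1, f, hf => by
    rw [← (Fin.consEquiv fun _ => α).tsum_eq, Fin.prod_univ_succ,
      ← tsum_prod_apply_eq_prod_tsum fun i => hf i.succ,
      tsum_mul_tsum_of_summable_norm (hf 0) (summable_norm_prod_apply fun i => hf i.succ)]
    simp [Fin.prod_univ_succ]

theorem hasSum_prod_mul_sum_apply {α : Type*} {d : ℕ} {p w : Fin d → α → ℝ}
    (hp0 : ∀ i k, 0 ≤ p i k) (hp1 : ∀ i, HasSum (p i) 1)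
    (hw : ∀ i, Summable fun k => p i k * w i k) :
    HasSum (fun x : Fin d → α => (∏ j, p j (x j)) * ∑ i, w i (x i))
      (∑ i, ∑' k, p i k * w i k) := by
  simp only [Finset.mul_sum]
  refine hasSum_sum fun i _ => ?_
  set f : Fin d → α → ℝ := fun j k => p j k * if j = i then w i k else 1
  have hf : ∀ j, Summable fun k => ‖f j k‖ := by
    intro j
    by_cases hj : j = i
    · subst hj; simpa [f] using (hw j).norm
    · simpa [f, hj, Real.norm_eq_abs, abs_of_nonneg (hp0 j _)] using (hp1 j).summable
  have key := (summable_norm_prod_apply hf).of_norm.hasSum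
  rw [tsum_prod_apply_eq_prod_tsum hf] at key
  have hval : ∏ j, ∑' k, f j k = ∑' k, p i k * w i k := by
    rw [← Fintype.prod_ite_eq' i fun _ => ∑' k, p i k * w i k]
    refine Finset.prod_congr rfl fun j _ => ?_
    by_cases hj : j = i
    · subst hj; simp [f]
    · simp [f, hj, (hp1 j).tsum_eq]
  rw [hval] at key
  exact key.congr_fun fun x => by simp only [f, Finset.prod_mul_distrib, Fintype.prod_ite_eq']

def klRiskCoord (μx μy : ℝ) (q : ℕ → ℕ → ℝ) : ℝ :=
  ∑' t : ℕ, poissonPMF μx t * ∑' k : ℕ, poissonPMF μy k * log (poissonPMF μy k / q t k)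

theorem klRisk_prod_eq_sum {d : ℕ} {rx ry lam : Fin d → ℝ} {q : Fin d → ℕ → ℕ → ℝ}
    (hx : ∀ i, 0 ≤ rx i * lam i) (hy : ∀ i, 0 < ry i * lam i) (hq : ∀ i t k, 0 < q i t k)
    (hinner : ∀ i t, Summable fun k =>
      poissonPMF (ry i * lam i) k * log (poissonPMF (ry i * lam i) k / q i t k))
    (houter : ∀ i, Summable fun t => poissonPMF (rx i * lam i) t *
      ∑' k, poissonPMF (ry i * lam i) k * log (poissonPMF (ry i * lam i) k / q i t k)) :
    klRisk rx ry lam (fun x y => ∏ i, q i (x i) (y i)) =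
      ∑ i, klRiskCoord (rx i * lam i) (ry i * lam i) (q i) := by
  have hlog : ∀ x y : Fin d → ℕ,
      log ((∏ i, poissonPMF (ry i * lam i) (y i)) / ∏ i, q i (x i) (y i)) =
        ∑ i, log (poissonPMF (ry i * lam i) (y i) / q i (x i) (y i)) := fun x y => by
    rw [← Finset.prod_div_distrib,
      log_prod fun i _ => (div_pos (poissonPMF_pos (hy i) _) (hq i _ _)).ne']
  have hinner' := fun x : Fin d → ℕ => (hasSum_prod_mul_sum_apply
    (fun i => poissonPMF_nonneg (hy i).le) (fun i => hasSum_poissonPMF _)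
    (fun i => hinner i (x i))).tsum_eq
  simp only [klRisk, prodPoisson, hlog, hinner']
  exact (hasSum_prod_mul_sum_apply (fun i => poissonPMF_nonneg (hx i))
    (fun i => hasSum_poissonPMF _) houter).tsum_eq

/-- `gammaPred r s β αg x y = ∏ i, gammaPredCoord r s (αg i) (β i) (x i) (y i)` by `rfl`. -/
def gammaPredCoord (r s α b : ℝ) (t k : ℕ) : ℝ :=
  ((r + α) / (r + s + α)) ^ ((t : ℝ) + b) * (s / (r + s + α)) ^ k *
    (Gamma ((t : ℝ) + (k : ℝ) + b) / (Gamma ((t : ℝ) + b) * (Nat.factorial k)))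

def gammaCoordRiskBound (r s α b Λ : ℝ) : ℝ :=
  s * Λ * log ((r + s + α) * Λ) - (r * Λ + b) * log ((r + α) / (r + s + α)) -
    (r * Λ + b + s * Λ) * log (r * Λ + b + s * Λ) + (r * Λ + b) * log (r * Λ + b) -
    (r * Λ + s * Λ) / (r * Λ + b + s * Λ)

section gammaPredCoord

variable {r s α b Λ : ℝ}

theorem gammaPredCoord_pos (hr : 0 < r) (hs : 0 < s) (hα : 0 < α) (hb : 0 < b) (t k : ℕ) :
    0 < gammaPredCoord r s α b t k := by
  unfold gammaPredCoord
  have := Gamma_pos_of_pos (by positivity : 0 < (t : ℝ) + k + b)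
  have := Gamma_pos_of_pos (by positivity : 0 < (t : ℝ) + b)
  positivity

theorem log_poissonPMF_div_gammaPredCoord (hr : 0 < r) (hs : 0 < s) (hα : 0 < α) (hb : 0 < b)
    (hΛ : 0 < Λ) (t k : ℕ) :
    log (poissonPMF (s * Λ) k / gammaPredCoord r s α b t k) =
      -(s * Λ) + k * log ((r + s + α) * Λ) - (t + b) * log ((r + α) / (r + s + α)) -
        (log (Gamma (t + b + k)) - log (Gamma (t + b))) := by
  have := Gamma_pos_of_pos (by positivity : 0 < (t : ℝ) + k + b)
  have := Gamma_pos_of_pos (by positivity : 0 < (t : ℝ) + b)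
  simp (disch := positivity) only [poissonPMF, gammaPredCoord, log_mul, log_div, log_exp, log_pow,
    log_rpow, add_right_comm (t : ℝ) (k : ℝ) b]
  ring

theorem hasSum_poissonPMF_mul_log_div_gammaPredCoord (hr : 0 < r) (hs : 0 < s) (hα : 0 < α)
    (hb : 0 < b) (hΛ : 0 < Λ) (t : ℕ) :
    HasSum
      (fun k => poissonPMF (s * Λ) k * log (poissonPMF (s * Λ) k / gammaPredCoord r s α b t k))
      (-(s * Λ) + s * Λ * log ((r + s + α) * Λ) - (t + b) * log ((r + α) / (r + s + α)) -
        logGammaRatioMean (s * Λ) (t + b)) := by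
  have hG : HasSum _ (logGammaRatioMean (s * Λ) (t + b)) :=
    (summable_poissonPMF_mul_log_Gamma_sub (by positivity) (by positivity)).hasSum
  have h := (hasSum_poissonPMF_mul_quadratic (s * Λ) 0
    (-(s * Λ) - (t + b) * log ((r + α) / (r + s + α))) (log ((r + s + α) * Λ)) 0).sub hG
  refine (congrArg (HasSum _) ?_).mpr (h.congr_fun fun k => ?_)
  · ring
  · rw [log_poissonPMF_div_gammaPredCoord hr hs hα hb hΛ]
    ring

theorem hasSum_poissonPMF_mul_tsum_log_div_gammaPredCoord (hr : 0 < r) (hs : 0 < s)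
    (hα : 0 < α) (hb : 0 < b) (hΛ : 0 < Λ) :
    HasSum (fun t => poissonPMF (r * Λ) t *
        ∑' k, poissonPMF (s * Λ) k * log (poissonPMF (s * Λ) k / gammaPredCoord r s α b t k))
      (-(s * Λ) + s * Λ * log ((r + s + α) * Λ) - (r * Λ + b) * log ((r + α) / (r + s + α)) -
        ∑' t : ℕ, poissonPMF (r * Λ) t * logGammaRatioMean (s * Λ) (t + b)) := by
  have hG := (summable_poissonPMF_mul_logGammaRatioMean (by positivity : 0 ≤ r * Λ)
    (by positivity : 0 ≤ s * Λ) hb).hasSum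
  have h := (hasSum_poissonPMF_mul_quadratic (r * Λ) b
    (-(s * Λ) + s * Λ * log ((r + s + α) * Λ)) (-log ((r + α) / (r + s + α))) 0).sub hG
  refine (congrArg (HasSum _) ?_).mpr (h.congr_fun fun t => ?_)
  · ring
  · rw [(hasSum_poissonPMF_mul_log_div_gammaPredCoord hr hs hα hb hΛ t).tsum_eq]
    ring

theorem gammaCoordRiskBound_le_klRiskCoord (hr : 0 < r) (hs : 0 < s) (hα : 0 < α) (hb : 0 < b)
    (hΛ : 0 < Λ) :
    gammaCoordRiskBound r s α b Λ ≤
      klRiskCoord (r * Λ) (s * Λ) (gammaPredCoord r s α b) := by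
  rw [klRiskCoord, (hasSum_poissonPMF_mul_tsum_log_div_gammaPredCoord hr hs hα hb hΛ).tsum_eq,
    gammaCoordRiskBound]
  have := tsum_poissonPMF_mul_logGammaRatioMean_le (by positivity : 0 ≤ r * Λ)
    (by positivity : 0 ≤ s * Λ) hb
  linarith

end gammaPredCoord

section gammaCoordRiskBound

variable {r s α b : ℝ}

theorem gammaCoordRiskBound_slope_pos (hr : 0 < r) (hs : 0 < s) (hα : 0 < α) :
    0 < s * log (r + s + α) - r * log ((r + α) / (r + s + α)) - (r + s) * log (r + s) +
      r * log r := by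
  have h₁ := log_lt_sub_one_of_pos (by positivity : 0 < (r + s) / (r + s + α))
    (by rw [Ne, div_eq_one_iff_eq (by positivity)]; linarith)
  have h₂ := log_lt_sub_one_of_pos (by positivity : 0 < (r + s) * (r + α) / (r * (r + s + α)))
    (by rw [Ne, div_eq_one_iff_eq (by positivity)]; nlinarith)
  have hsum : s * ((r + s) / (r + s + α) - 1) + r * ((r + s) * (r + α) / (r * (r + s + α)) - 1)
      = 0 := by
    field_simp; ring
  rw [log_div (by positivity) (by positivity)] at h₁ ⊢
  rw [log_div (by positivity) (by positivity), log_mul (by positivity) (by positivity),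
    log_mul (by positivity) (by positivity)] at h₂
  linarith [mul_lt_mul_of_pos_left h₁ hs, mul_lt_mul_of_pos_left h₂ hr]

theorem tendsto_gammaCoordRiskBound (hr : 0 < r) (hs : 0 < s) (hα : 0 < α) (hb : 0 < b) :
    Tendsto (gammaCoordRiskBound r s α b) atTop atTop := by
  -- `F Λ⁻¹ = gammaCoordRiskBound r s α b Λ / Λ`
  set F : ℝ → ℝ := fun ε =>
    s * log (r + s + α) - (r + b * ε) * log ((r + α) / (r + s + α)) -
      (r + s + b * ε) * log (r + s + b * ε) + (r + b * ε) * log (r + b * ε) -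
      (r + s) * ε / (r + s + b * ε)
  have hF : ContinuousAt F 0 := by
    have := continuous_mul_log
    fun_prop (disch := simp; positivity)
  have hF0 : 0 < F 0 := by simpa [F] using gammaCoordRiskBound_slope_pos hr hs hα
  refine (tendsto_id.atTop_mul_pos hF0 (hF.tendsto.comp tendsto_inv_atTop_zero)).congr' ?_
  filter_upwards [eventually_gt_atTop 0] with Λ hΛ
  have hu : r + s + b * Λ⁻¹ = (r * Λ + b + s * Λ) / Λ := by field_simp; ring
  have hv : r + b * Λ⁻¹ = (r * Λ + b) / Λ := by field_simp
  simp only [F, Function.comp_apply, id, gammaCoordRiskBound, hu, hv]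
  rw [log_div (by positivity) hΛ.ne', log_div (by positivity) hΛ.ne',
    log_mul (by positivity) hΛ.ne']
  field_simp
  ring

end gammaCoordRiskBound

theorem gamma_prior_risk_unbounded
    (d : ℕ) (hd : 1 ≤ d) (r s : ℝ) (hr : 0 < r) (hs : 0 < s)
    (β : Fin d → ℝ) (hβ : ∀ i, 0 < β i)
    (αg : Fin d → ℝ) (hαg : ∀ i, 0 < αg i) :
    ∀ M : ℝ, 0 < M → ∃ lam ∈ posOrthant d,
      M < klRisk (fun _ => r) (fun _ => s) lam (fun x y => gammaPred r s β αg x y) := by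
  intro M _
  obtain ⟨Λ, hΛ, hbound⟩ : ∃ Λ : ℝ, 0 < Λ ∧
      ∀ i, max M 0 < gammaCoordRiskBound r s (αg i) (β i) Λ :=
    ((eventually_gt_atTop 0).and (eventually_all.2 fun i =>
      (tendsto_gammaCoordRiskBound hr hs (hαg i) (hβ i)).eventually_gt_atTop (max M 0))).exists
  refine ⟨fun _ => Λ, fun _ => hΛ, ?_⟩
  have hrisk := klRisk_prod_eq_sum (fun _ => (mul_pos hr hΛ).le) (fun _ => mul_pos hs hΛ)
    (fun i => gammaPredCoord_pos hr hs (hαg i) (hβ i))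
    (fun i t =>
      (hasSum_poissonPMF_mul_log_div_gammaPredCoord hr hs (hαg i) (hβ i) hΛ t).summable)
    (fun i =>
      (hasSum_poissonPMF_mul_tsum_log_div_gammaPredCoord hr hs (hαg i) (hβ i) hΛ).summable)
  let i₀ : Fin d := ⟨0, hd⟩
  calc M < gammaCoordRiskBound r s (αg i₀) (β i₀) Λ :=
        (le_max_left _ _).trans_lt (hbound i₀)
    _ ≤ ∑ i, gammaCoordRiskBound r s (αg i) (β i) Λ :=
        Finset.single_le_sum (fun i _ => ((le_max_right _ _).trans_lt (hbound i)).le)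
          (Finset.mem_univ i₀)
    _ ≤ ∑ i, klRiskCoord (r * Λ) (s * Λ) (gammaPredCoord r s (αg i) (β i)) :=
        Finset.sum_le_sum fun i _ => gammaCoordRiskBound_le_klRiskCoord hr hs (hαg i) (hβ i) hΛ
    _ = _ := hrisk.symm
end
end

section
/- Suppose that for every z ∈ ℕ^d and every t > 0, F(z,t) is finite and positive and Σ_{i=1}^d z_i (F(z,t) − F(z−δ_i,t)) + Σ_{i=1}^d (z_i+β_i)(F(z,t) − F(z+δ_i,t)) ≥ 0. Then for every r > 0 and every λ ∈ (0,∞)^d there exists ε > 0 such that Σ_{z∈ℕ^d} max_{t∈[r−ε,r+ε]} { |log F(z,t)| · (Σ_{i=1}^d z_i + 1) · ∏_{i=1}^d (tλ_i)^{z_i} e^{−tλ_i}/z_i! } < ∞; in particular, Σ_{z∈ℕ^d} |log F(z,r)| ∏_{i=1}^d (rλ_i)^{z_i} e^{−rλ_i}/z_i! < ∞. -/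
open MeasureTheory Real Filter

noncomputable section

/-- The integrand of the function `F(z,t)`. -/
noncomputable def Fintegrand {d : ℕ} (β : Fin d → ℝ) (f : (Fin d → ℝ) → ℝ)
    (z : Fin d → ℕ) (t : ℝ) (lam : Fin d → ℝ) : ℝ :=
  f (fun i => Real.sqrt (lam i)) *
    ∏ i, t ^ ((z i : ℝ) + β i) * lam i ^ ((z i : ℝ) + β i - 1) * Real.exp (-(t * lam i)) /
      Real.Gamma ((z i : ℝ) + β i)

/-- `F(z,t) = ∫ f(√λ) ∏ t^{z_i+β_i} λ_i^{z_i+β_i-1} e^{-tλ_i}/Γ(z_i+β_i) dλ`. -/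
noncomputable def Ffun {d : ℕ} (β : Fin d → ℝ) (f : (Fin d → ℝ) → ℝ)
    (z : Fin d → ℕ) (t : ℝ) : ℝ :=
  ∫ lam in posOrthant d, Fintegrand β f z t lam

/-- `F(z - δ_i, t)` with the convention that it equals `1` when `z i = 0`. -/
noncomputable def FfunDown {d : ℕ} (β : Fin d → ℝ) (f : (Fin d → ℝ) → ℝ)
    (z : Fin d → ℕ) (t : ℝ) (i : Fin d) : ℝ :=
  if z i = 0 then 1 else Ffun β f (Function.update z i (z i - 1)) t


/-! The inequality says that `F(·, t)` is superharmonic for a birth–death chain on `ℕ^d`.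
Keeping a single term of it shows that `F(·, t)` changes by at most a factor `K (|z| + 1)` between
neighbouring points, with `K` depending only on `β`, so
`|log F(z, t)| ≤ |log F(0, t)| + |z| (log K + |z|)`. Rescaling the Gamma densities gives
`F(0, t) ≤ (t / s) ^ (∑ β) F(0, s)` for `s ≤ t`, which bounds `|log F(0, t)|` uniformly for `t`
near `r`. The resulting polynomial growth in `|z|` is absorbed by the Poisson weights, whose sum
over `ℕ^d` is a product of exponentials. -/

open Finset Function
open scoped Nat

lemma log_sub_log_le_of_le_mul {a b c : ℝ} (ha : 0 < a) (hb : 0 < b) (h : a ≤ c * b) :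
    log a - log b ≤ log c := by
  rw [← log_div ha.ne' hb.ne']
  exact log_le_log (div_pos ha hb) ((div_le_iff₀ hb).2 h)

lemma abs_log_le_of_le_rpow_mul {g : ℝ → ℝ} {B s t u : ℝ} (hB : 0 ≤ B) (hs : 0 < s)
    (hst : s ≤ t) (htu : t ≤ u) (hpos : ∀ a, 0 < a → 0 < g a)
    (hg : ∀ a b, 0 < a → a ≤ b → g b ≤ (b / a) ^ B * g a) :
    |log (g t)| ≤ |log (g s)| + |log (g u)| + B * log (u / s) := by
  have ht : 0 < t := hs.trans_le hst
  have hlog : ∀ a b, 0 < a → a ≤ b → log (g b) - log (g a) ≤ B * log (b / a) :=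
    fun a b ha hab => by
      rw [← log_rpow (div_pos (ha.trans_le hab) ha)]
      exact log_sub_log_le_of_le_mul (hpos b (ha.trans_le hab)) (hpos a ha) (hg a b ha hab)
  have hts : B * log (t / s) ≤ B * log (u / s) := mul_le_mul_of_nonneg_left
    (log_le_log (div_pos ht hs) (div_le_div_of_nonneg_right htu hs.le)) hB
  have hut : B * log (u / t) ≤ B * log (u / s) := mul_le_mul_of_nonneg_left
    (log_le_log (div_pos (ht.trans_le htu) ht)
      (div_le_div_of_nonneg_left (ht.trans_le htu).le hs hst)) hB
  rw [abs_le]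
  constructor <;> linarith [hlog s t hs hst, hlog t u ht htu, le_abs_self (log (g s)),
    neg_abs_le (log (g u)), abs_nonneg (log (g s)), abs_nonneg (log (g u))]

lemma summable_prod_pow_div_factorial {ι : Type*} [Fintype ι] {x : ι → ℝ}
    (hx : ∀ i, 0 ≤ x i) :
    Summable fun z : ι → ℕ => ∏ i, x i ^ z i / (z i)! := by
  classical
  have hterm : ∀ i k, 0 ≤ x i ^ k / k ! := fun i k => by have := hx i; positivity
  refine summable_of_sum_le (c := ∏ i, exp (x i)) (fun z => prod_nonneg fun i _ => hterm i _)
    fun u => ?_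
  set M := u.sup (fun z => ∑ i, z i) + 1
  have hu : u ⊆ Fintype.piFinset fun _ => range M := fun z hz =>
    Fintype.mem_piFinset.2 fun i => mem_range.2 <| Nat.lt_succ_of_le <|
      (single_le_sum (fun j _ => Nat.zero_le (z j)) (mem_univ i)).trans
        (le_sup (f := fun z => ∑ i, z i) hz)
  calc ∑ z ∈ u, ∏ i, x i ^ z i / (z i)!
      ≤ ∑ z ∈ Fintype.piFinset fun _ => range M, ∏ i, x i ^ z i / (z i)! :=
        sum_le_sum_of_subset_of_nonneg hu fun z _ _ => prod_nonneg fun i _ => hterm i _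
    _ = ∏ i, ∑ k ∈ range M, x i ^ k / k ! :=
        (prod_univ_sum (fun _ => range M) fun i k => x i ^ k / k !).symm
    _ ≤ ∏ i, exp (x i) :=
        prod_le_prod (fun i _ => sum_nonneg fun k _ => hterm i k)
          fun i _ => Real.sum_le_exp_of_nonneg (hx i) M

lemma mul_succ_le_mul_eight_pow {L a : ℝ} (hL : 0 ≤ L) (ha : 0 ≤ a) (n : ℕ) :
    (L + n * (a + n)) * (n + 1) ≤ (L + a + 1) * 8 ^ n := by
  have hn : (n : ℝ) + 1 ≤ 2 ^ n := by exact_mod_cast Nat.lt_two_pow_self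
  have hcube : ((n : ℝ) + 1) ^ 3 ≤ 8 ^ n := calc
    ((n : ℝ) + 1) ^ 3 ≤ (2 ^ n) ^ 3 := by gcongr
    _ = 8 ^ n := by rw [← pow_mul, mul_comm, pow_mul]; norm_num
  calc (L + n * (a + n)) * (n + 1) ≤ (L + a + 1) * ((n : ℝ) + 1) ^ 2 * (n + 1) := by
        gcongr
        nlinarith [mul_nonneg hL (by positivity : (0 : ℝ) ≤ n * (n + 2)),
          mul_nonneg ha (by positivity : (0 : ℝ) ≤ n * n + n + 1)]
    _ = (L + a + 1) * ((n : ℝ) + 1) ^ 3 := by ring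
    _ ≤ (L + a + 1) * 8 ^ n := by gcongr

lemma pow_sum_mul_prod_poisson_le {ι : Type*} [Fintype ι] {a t c : ℝ} (ha : 0 ≤ a)
    (ht : 0 ≤ t) (htc : t ≤ c) {x : ι → ℝ} (hx : ∀ i, 0 ≤ x i) (z : ι → ℕ) :
    a ^ (∑ i, z i) * ∏ i, (t * x i) ^ z i * exp (-(t * x i)) / (z i)! ≤
      ∏ i, (a * c * x i) ^ z i / (z i)! := by
  rw [← prod_pow_eq_pow_sum, ← prod_mul_distrib]
  refine prod_le_prod (fun i _ => by have := hx i; positivity) fun i _ => ?_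
  have hxi := hx i
  calc a ^ z i * ((t * x i) ^ z i * exp (-(t * x i)) / (z i)!)
      ≤ a ^ z i * ((c * x i) ^ z i / (z i)!) := by
        have hexp : exp (-(t * x i)) ≤ 1 := exp_le_one_iff.2 (neg_nonpos.2 (by positivity))
        gcongr
        calc (t * x i) ^ z i * exp (-(t * x i)) ≤ (t * x i) ^ z i * 1 := by gcongr
          _ ≤ (c * x i) ^ z i := by rw [mul_one]; gcongr
    _ = (a * c * x i) ^ z i / (z i)! := by rw [mul_assoc a, mul_pow]; ring

lemma abs_mul_prod_poisson_le {ι : Type*} [Fintype ι] {y L a t c : ℝ} (hL : 0 ≤ L)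
    (ha : 0 ≤ a) (ht : 0 ≤ t) (htc : t ≤ c) {x : ι → ℝ} (hx : ∀ i, 0 ≤ x i) {z : ι → ℕ}
    (hy : |y| ≤ L + (∑ i, (z i : ℝ)) * (a + ∑ i, (z i : ℝ))) :
    |y| * (∑ i, (z i : ℝ) + 1) * ∏ i, (t * x i) ^ z i * exp (-(t * x i)) / (z i)! ≤
      (L + a + 1) * ∏ i, (8 * c * x i) ^ z i / (z i)! := by
  have hP : 0 ≤ ∏ i, (t * x i) ^ z i * exp (-(t * x i)) / (z i)! :=
    prod_nonneg fun i _ => by have := hx i; positivity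
  rw [← Nat.cast_sum] at hy ⊢
  calc |y| * ((∑ i, z i : ℕ) + 1) * ∏ i, (t * x i) ^ z i * exp (-(t * x i)) / (z i)!
      ≤ (L + (∑ i, z i : ℕ) * (a + (∑ i, z i : ℕ))) * ((∑ i, z i : ℕ) + 1) *
          ∏ i, (t * x i) ^ z i * exp (-(t * x i)) / (z i)! := by gcongr
    _ ≤ (L + a + 1) * 8 ^ (∑ i, z i) * ∏ i, (t * x i) ^ z i * exp (-(t * x i)) / (z i)! :=
        mul_le_mul_of_nonneg_right (mul_succ_le_mul_eight_pow hL ha _) hP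
    _ ≤ (L + a + 1) * ∏ i, (8 * c * x i) ^ z i / (z i)! := by
        rw [mul_assoc]
        gcongr
        exact pow_sum_mul_prod_poisson_le (by norm_num) ht htc hx z

lemma tsum_biSup_ofReal_lt_top {ι α : Type*} {h : ι → α → ℝ} {g : ι → ℝ} {S : Set α}
    (hg : Summable g) (hle : ∀ i, ∀ a ∈ S, h i a ≤ g i) :
    ∑' i, ⨆ a ∈ S, ENNReal.ofReal (h i a) < ⊤ :=
  (ENNReal.tsum_le_tsum fun i => iSup₂_le fun a ha =>
    ENNReal.ofReal_le_ofReal (hle i a ha)).trans_lt hg.tsum_ofReal_lt_top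

lemma exists_forall_two_add_sum_le_mul {ι : Type*} [Fintype ι] {β : ι → ℝ}
    (hβ : ∀ i, 0 < β i) : ∃ K, 2 + ∑ j, β j ≤ K ∧ ∀ i, 2 + ∑ j, β j ≤ β i * K := by
  have hB : 0 ≤ 2 + ∑ j, β j := add_nonneg zero_le_two (sum_nonneg fun j _ => (hβ j).le)
  have hinv : 0 ≤ ∑ j, (β j)⁻¹ := sum_nonneg fun j _ => inv_nonneg.2 (hβ j).le
  refine ⟨(2 + ∑ j, β j) * (1 + ∑ j, (β j)⁻¹), le_mul_of_one_le_right hB (by linarith),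
    fun i => ?_⟩
  have hi : 1 ≤ β i * (1 + ∑ j, (β j)⁻¹) := calc
    1 = β i * (β i)⁻¹ := (mul_inv_cancel₀ (hβ i).ne').symm
    _ ≤ β i * (1 + ∑ j, (β j)⁻¹) := mul_le_mul_of_nonneg_left
      (le_add_of_nonneg_of_le zero_le_one
        (single_le_sum (fun j _ => inv_nonneg.2 (hβ j).le) (mem_univ i))) (hβ i).le
  calc 2 + ∑ j, β j ≤ (2 + ∑ j, β j) * (β i * (1 + ∑ j, (β j)⁻¹)) :=
        le_mul_of_one_le_right hB hi
    _ = β i * ((2 + ∑ j, β j) * (1 + ∑ j, (β j)⁻¹)) := by ring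

section Lattice

variable {ι : Type*} [Fintype ι] [DecidableEq ι]

lemma sum_update_succ (z : ι → ℕ) (i : ι) : ∑ j, update z i (z i + 1) j = ∑ j, z j + 1 := by
  rw [sum_update_of_mem (mem_univ i), ← add_sum_erase univ z (mem_univ i),
    sdiff_singleton_eq_erase]
  ring

lemma exists_eq_update_succ {z : ι → ℕ} {n : ℕ} (hz : ∑ i, z i = n + 1) :
    ∃ w i, ∑ j, w j = n ∧ update w i (w i + 1) = z := by
  obtain ⟨i, -, hi⟩ := exists_ne_zero_of_sum_ne_zero (by rw [hz]; exact n.succ_ne_zero)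
  have hw : update (update z i (z i - 1)) i (update z i (z i - 1) i + 1) = z := by
    rw [update_self, update_idem, Nat.sub_add_cancel (Nat.one_le_iff_ne_zero.2 hi),
      update_eq_self]
  refine ⟨_, i, ?_, hw⟩
  have := sum_update_succ (update z i (z i - 1)) i
  rw [hw] at this
  omega

lemma abs_sub_le_of_abs_update_succ_sub_le {g : (ι → ℕ) → ℝ} {a : ℝ}
    (hg : ∀ z i, |g (update z i (z i + 1)) - g z| ≤ a + ∑ j, (z j : ℝ)) (z : ι → ℕ) :
    |g z - g 0| ≤ (∑ j, (z j : ℝ)) * (a + ∑ j, (z j : ℝ)) := by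
  simp only [← Nat.cast_sum]
  induction hn : ∑ j, z j generalizing z with
  | zero =>
    obtain rfl : z = 0 := funext fun i => sum_eq_zero_iff.1 hn i (mem_univ i)
    simp
  | succ n ih =>
    obtain ⟨w, i, hw, rfl⟩ := exists_eq_update_succ hn
    have hstep := hg w i
    rw [← Nat.cast_sum, hw] at hstep
    calc |g (update w i (w i + 1)) - g 0|
        ≤ |g (update w i (w i + 1)) - g w| + |g w - g 0| := abs_sub_le _ _ _
      _ ≤ (a + n) + n * (a + n) := add_le_add hstep (ih w hw)
      _ ≤ ((n + 1 : ℕ) : ℝ) * (a + ((n + 1 : ℕ) : ℝ)) := by push_cast; nlinarith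

/-- `F` is superharmonic for the birth–death chain on `ℕ^ι` that moves from `z` to `z - δ i` at
rate `z i` and to `z + δ i` at rate `z i + β i`. The truncated `z i - 1` is harmless: its
coefficient `z i` vanishes whenever the truncation occurs. -/
def IsSuperharmonic (β : ι → ℝ) (F : (ι → ℕ) → ℝ) : Prop :=
  ∀ z, ∑ i, (z i : ℝ) * (F (update z i (z i - 1)) - F z) +
    ∑ i, ((z i : ℝ) + β i) * (F (update z i (z i + 1)) - F z) ≤ 0

namespace IsSuperharmonic

variable {β : ι → ℝ} {F : (ι → ℕ) → ℝ}

lemma shifts_le (hF : IsSuperharmonic β F) (z : ι → ℕ) :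
    ∑ i, (z i : ℝ) * F (update z i (z i - 1)) +
        ∑ i, ((z i : ℝ) + β i) * F (update z i (z i + 1)) ≤
      (2 * ∑ i, (z i : ℝ) + ∑ i, β i) * F z := by
  have h := hF z
  simp only [mul_sub, sum_sub_distrib, ← sum_mul, sum_add_distrib] at h
  linarith

lemma update_succ_le (hF : IsSuperharmonic β F) (hβ : ∀ i, 0 < β i) (hpos : ∀ z, 0 < F z)
    {K : ℝ} (hK : ∀ i, 2 + ∑ j, β j ≤ β i * K) (z : ι → ℕ) (i : ι) :
    F (update z i (z i + 1)) ≤ K * (∑ j, (z j : ℝ) + 1) * F z := by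
  have hup : β i * F (update z i (z i + 1)) ≤ (2 * ∑ j, (z j : ℝ) + ∑ j, β j) * F z := by
    have hdown : 0 ≤ ∑ j, (z j : ℝ) * F (update z j (z j - 1)) :=
      sum_nonneg fun j _ => mul_nonneg (Nat.cast_nonneg _) (hpos _).le
    calc β i * F (update z i (z i + 1))
        ≤ ((z i : ℝ) + β i) * F (update z i (z i + 1)) := by
          gcongr
          · exact (hpos _).le
          · exact le_add_of_nonneg_left (Nat.cast_nonneg _)
      _ ≤ ∑ j, ((z j : ℝ) + β j) * F (update z j (z j + 1)) :=
          single_le_sum (f := fun j => ((z j : ℝ) + β j) * F (update z j (z j + 1)))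
            (fun j _ => mul_nonneg (add_nonneg (Nat.cast_nonneg _) (hβ j).le) (hpos _).le)
            (mem_univ i)
      _ ≤ _ := by linarith [hF.shifts_le z]
  have hrate : 2 * ∑ j, (z j : ℝ) + ∑ j, β j ≤ β i * (K * (∑ j, (z j : ℝ) + 1)) := by
    have hN : 0 ≤ ∑ j, (z j : ℝ) := sum_nonneg fun j _ => Nat.cast_nonneg _
    have hB : 0 ≤ ∑ j, β j := sum_nonneg fun j _ => (hβ j).le
    calc 2 * ∑ j, (z j : ℝ) + ∑ j, β j ≤ (2 + ∑ j, β j) * (∑ j, (z j : ℝ) + 1) := by nlinarith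
      _ ≤ β i * K * (∑ j, (z j : ℝ) + 1) := mul_le_mul_of_nonneg_right (hK i) (by positivity)
      _ = β i * (K * (∑ j, (z j : ℝ) + 1)) := mul_assoc _ _ _
  refine le_of_mul_le_mul_left (hup.trans ?_) (hβ i)
  rw [← mul_assoc]
  exact mul_le_mul_of_nonneg_right hrate (hpos z).le

lemma le_update_succ (hF : IsSuperharmonic β F) (hβ : ∀ i, 0 ≤ β i) (hpos : ∀ z, 0 < F z)
    {K : ℝ} (hK : 2 + ∑ j, β j ≤ K) (z : ι → ℕ) (i : ι) :
    F z ≤ K * (∑ j, (z j : ℝ) + 1) * F (update z i (z i + 1)) := by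
  set z' := update z i (z i + 1)
  have hN : 0 ≤ ∑ j, (z j : ℝ) := sum_nonneg fun j _ => Nat.cast_nonneg _
  have hN' : ∑ j, (z' j : ℝ) = ∑ j, (z j : ℝ) + 1 := by
    exact_mod_cast sum_update_succ z i
  have hdown : F z ≤ ∑ j, (z' j : ℝ) * F (update z' j (z' j - 1)) := by
    calc F z ≤ ((z i : ℝ) + 1) * F z := le_mul_of_one_le_left (hpos z).le (by simp)
      _ = (z' i : ℝ) * F (update z' i (z' i - 1)) := by simp [z']
      _ ≤ _ := single_le_sum (f := fun j => (z' j : ℝ) * F (update z' j (z' j - 1)))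
          (fun j _ => mul_nonneg (Nat.cast_nonneg _) (hpos _).le) (mem_univ i)
  have hup : 0 ≤ ∑ j, ((z' j : ℝ) + β j) * F (update z' j (z' j + 1)) :=
    sum_nonneg fun j _ => mul_nonneg (add_nonneg (Nat.cast_nonneg _) (hβ j)) (hpos _).le
  have hrate : 2 * ∑ j, (z' j : ℝ) + ∑ j, β j ≤ K * (∑ j, (z j : ℝ) + 1) := by
    have hB : 0 ≤ ∑ j, β j := sum_nonneg fun j _ => hβ j
    rw [hN']
    nlinarith [mul_le_mul_of_nonneg_right hK (by linarith : (0 : ℝ) ≤ ∑ j, (z j : ℝ) + 1)]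
  calc F z ≤ (2 * ∑ j, (z' j : ℝ) + ∑ j, β j) * F z' := by linarith [hF.shifts_le z']
    _ ≤ K * (∑ j, (z j : ℝ) + 1) * F z' := mul_le_mul_of_nonneg_right hrate (hpos z').le

lemma abs_log_update_succ_sub_le (hF : IsSuperharmonic β F) (hβ : ∀ i, 0 < β i)
    (hpos : ∀ z, 0 < F z) {K : ℝ} (hK : 2 + ∑ j, β j ≤ K) (hKβ : ∀ i, 2 + ∑ j, β j ≤ β i * K)
    (z : ι → ℕ) (i : ι) :
    |log (F (update z i (z i + 1))) - log (F z)| ≤ log K + ∑ j, (z j : ℝ) := by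
  have hK0 : 0 < K := by linarith [sum_nonneg fun j (_ : j ∈ univ) => (hβ j).le]
  have hlog : log (K * (∑ j, (z j : ℝ) + 1)) ≤ log K + ∑ j, (z j : ℝ) := by
    rw [log_mul hK0.ne' (by positivity)]
    linarith [log_le_sub_one_of_pos (by positivity : (0 : ℝ) < ∑ j, (z j : ℝ) + 1)]
  rw [abs_sub_le_iff]
  constructor
  · exact (log_sub_log_le_of_le_mul (hpos _) (hpos _)
      (hF.update_succ_le hβ hpos hKβ z i)).trans hlog
  · exact (log_sub_log_le_of_le_mul (hpos _) (hpos _)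
      (hF.le_update_succ (fun j => (hβ j).le) hpos hK z i)).trans hlog

lemma abs_log_le (hF : IsSuperharmonic β F) (hβ : ∀ i, 0 < β i)
    (hpos : ∀ z, 0 < F z) {K : ℝ} (hK : 2 + ∑ j, β j ≤ K) (hKβ : ∀ i, 2 + ∑ j, β j ≤ β i * K)
    (z : ι → ℕ) :
    |log (F z)| ≤ |log (F 0)| + (∑ j, (z j : ℝ)) * (log K + ∑ j, (z j : ℝ)) := by
  have := abs_sub_le_of_abs_update_succ_sub_le (g := fun z => log (F z))
    (hF.abs_log_update_succ_sub_le hβ hpos hK hKβ) z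
  linarith [abs_sub_abs_le_abs_sub (log (F z)) (log (F 0))]

end IsSuperharmonic

end Lattice

section Ffun

lemma measurableSet_posOrthant (d : ℕ) : MeasurableSet (posOrthant d) := by
  simp only [posOrthant, Set.ofPred_forall]
  exact MeasurableSet.iInter fun i => measurableSet_lt measurable_const (measurable_pi_apply i)

variable {d : ℕ} {β : Fin d → ℝ} {f : (Fin d → ℝ) → ℝ}

lemma Fintegrand_le_rpow_mul (hβ : ∀ i, 0 < β i) (hf : ∀ θ, 0 ≤ f θ) (z : Fin d → ℕ)
    {s t : ℝ} (hs : 0 < s) (hst : s ≤ t) {lam : Fin d → ℝ} (hlam : lam ∈ posOrthant d) :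
    Fintegrand β f z t lam ≤ (t / s) ^ (∑ i, ((z i : ℝ) + β i)) * Fintegrand β f z s lam := by
  have ht : 0 < t := hs.trans_le hst
  have hts : 0 < t / s := div_pos ht hs
  unfold Fintegrand
  rw [mul_left_comm, rpow_sum_of_pos hts, ← prod_mul_distrib]
  refine mul_le_mul_of_nonneg_left (prod_le_prod (fun i _ => ?_) fun i _ => ?_) (hf _)
  all_goals
    have hΓ := Gamma_pos_of_pos (add_pos_of_nonneg_of_pos (Nat.cast_nonneg (z i)) (hβ i))
    have hlami : 0 < lam i := hlam i
  · positivity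
  · have hrescale :
        (t / s) ^ ((z i : ℝ) + β i) * s ^ ((z i : ℝ) + β i) = t ^ ((z i : ℝ) + β i) := by
      rw [← mul_rpow hts.le hs.le, div_mul_cancel₀ _ hs.ne']
    calc t ^ ((z i : ℝ) + β i) * lam i ^ ((z i : ℝ) + β i - 1) * exp (-(t * lam i)) /
          Gamma ((z i : ℝ) + β i)
        ≤ t ^ ((z i : ℝ) + β i) * lam i ^ ((z i : ℝ) + β i - 1) * exp (-(s * lam i)) /
          Gamma ((z i : ℝ) + β i) := by gcongr
      _ = _ := by rw [← hrescale]; ring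

lemma Ffun_le_rpow_mul (hβ : ∀ i, 0 < β i) (hf : ∀ θ, 0 ≤ f θ) (z : Fin d → ℕ) {s t : ℝ}
    (hs : 0 < s) (hst : s ≤ t) (hint_s : IntegrableOn (Fintegrand β f z s) (posOrthant d))
    (hint_t : IntegrableOn (Fintegrand β f z t) (posOrthant d)) :
    Ffun β f z t ≤ (t / s) ^ (∑ i, ((z i : ℝ) + β i)) * Ffun β f z s := by
  rw [Ffun, Ffun, ← integral_const_mul]
  exact setIntegral_mono_on hint_t (hint_s.const_mul _) (measurableSet_posOrthant d)
    fun lam hlam => Fintegrand_le_rpow_mul hβ hf z hs hst hlam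

lemma sum_mul_FfunDown (z : Fin d → ℕ) (t : ℝ) :
    ∑ i, (z i : ℝ) * FfunDown β f z t i = ∑ i, (z i : ℝ) * Ffun β f (update z i (z i - 1)) t :=
  sum_congr rfl fun i _ => by by_cases h : z i = 0 <;> simp [FfunDown, h]

lemma isSuperharmonic_Ffun {t : ℝ}
    (h : ∀ z : Fin d → ℕ, 0 ≤ ∑ i, (z i : ℝ) * (Ffun β f z t - FfunDown β f z t i) +
      ∑ i, ((z i : ℝ) + β i) * (Ffun β f z t - Ffun β f (update z i (z i + 1)) t)) :
    IsSuperharmonic β fun z => Ffun β f z t := by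
  intro z
  have hz := h z
  simp only [mul_sub, sum_sub_distrib, sum_mul_FfunDown] at hz ⊢
  linarith

end Ffun

theorem summability_of_log_F_general
    (d : ℕ) (β : Fin d → ℝ) (hβ : ∀ i, 0 < β i)
    (f : (Fin d → ℝ) → ℝ) (hf_nonneg : ∀ θ, 0 ≤ f θ)
    -- for every z and t > 0, F(z,t) is finite
    (hfin : ∀ (z : Fin d → ℕ) (t : ℝ), 0 < t →
      IntegrableOn (Fintegrand β f z t) (posOrthant d))
    -- and positive
    (hpos : ∀ (z : Fin d → ℕ) (t : ℝ), 0 < t → 0 < Ffun β f z t)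
    -- and the inequality holds
    (hineq : ∀ (z : Fin d → ℕ) (t : ℝ), 0 < t →
      0 ≤ ∑ i, (z i : ℝ) * (Ffun β f z t - FfunDown β f z t i) +
          ∑ i, ((z i : ℝ) + β i) *
            (Ffun β f z t - Ffun β f (Function.update z i (z i + 1)) t)) :
    ∀ (r : ℝ), 0 < r → ∀ lam ∈ posOrthant d,
      ∃ ε > (0 : ℝ),
        (∑' z : Fin d → ℕ,
          ⨆ t ∈ Set.Icc (r - ε) (r + ε),
            ENNReal.ofReal (|Real.log (Ffun β f z t)| * ((∑ i, (z i : ℝ)) + 1) *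
              ∏ i, (t * lam i) ^ (z i) * Real.exp (-(t * lam i)) / (Nat.factorial (z i))))
          < ⊤ ∧
        (∑' z : Fin d → ℕ,
          ENNReal.ofReal (|Real.log (Ffun β f z r)| *
            ∏ i, (r * lam i) ^ (z i) * Real.exp (-(r * lam i)) / (Nat.factorial (z i))))
          < ⊤ := by
  intro r hr lam hlam
  obtain ⟨K, hK, hKβ⟩ := exists_forall_two_add_sum_le_mul hβ
  have hK1 : 1 ≤ K := by linarith [sum_nonneg fun i (_ : i ∈ univ) => (hβ i).le]
  obtain ⟨L, hL⟩ : ∃ L, ∀ t ∈ Set.Icc (r - r / 2) (r + r / 2), |log (Ffun β f 0 t)| ≤ L :=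
    ⟨_, fun t ht => abs_log_le_of_le_rpow_mul (sum_nonneg fun i _ => (by simpa using (hβ i).le))
      (by linarith) ht.1 ht.2 (hpos 0) fun a b ha hab =>
        Ffun_le_rpow_mul hβ hf_nonneg 0 ha hab (hfin 0 a ha) (hfin 0 b (ha.trans_le hab))⟩
  have hL0 : 0 ≤ L := (abs_nonneg _).trans (hL r ⟨by linarith, by linarith⟩)
  have hterm : ∀ z : Fin d → ℕ, ∀ t ∈ Set.Icc (r - r / 2) (r + r / 2),
      |log (Ffun β f z t)| * (∑ i, (z i : ℝ) + 1) *
          ∏ i, (t * lam i) ^ z i * exp (-(t * lam i)) / (z i)! ≤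
        (L + log K + 1) * ∏ i, (8 * (2 * r) * lam i) ^ z i / (z i)! := fun z t ht => by
    have ht0 : 0 < t := by linarith [ht.1]
    refine abs_mul_prod_poisson_le hL0 (log_nonneg hK1) ht0.le (by linarith [ht.2])
      (fun i => (hlam i).le) ?_
    linarith [hL t ht, (isSuperharmonic_Ffun fun z => hineq z t ht0).abs_log_le hβ
      (fun z => hpos z t ht0) hK hKβ z]
  have hsum := (summable_prod_pow_div_factorial fun i =>
    (by have := hlam i; positivity : 0 ≤ 8 * (2 * r) * lam i)).mul_left (L + log K + 1)
  have hmain := tsum_biSup_ofReal_lt_top hsum hterm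
  refine ⟨r / 2, half_pos hr, hmain, (ENNReal.tsum_le_tsum fun z => ?_).trans_lt hmain⟩
  refine le_iSup₂_of_le r ⟨by linarith, by linarith⟩ (ENNReal.ofReal_le_ofReal ?_)
  refine mul_le_mul_of_nonneg_right (le_mul_of_one_le_right (abs_nonneg _) ?_)
    (prod_nonneg fun i _ => by have := hlam i; positivity)
  linarith [sum_nonneg fun i (_ : i ∈ univ) => Nat.cast_nonneg (α := ℝ) (z i)]

theorem summability_of_log_F
    (d : ℕ) (hd : 1 ≤ d) (β : Fin d → ℝ) (hβ : ∀ i, 0 < β i)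
    (f : (Fin d → ℝ) → ℝ) (hf_nonneg : ∀ θ, 0 ≤ f θ)
    -- for every z and t > 0, F(z,t) is finite
    (hfin : ∀ (z : Fin d → ℕ) (t : ℝ), 0 < t →
      IntegrableOn (Fintegrand β f z t) (posOrthant d))
    -- and positive
    (hpos : ∀ (z : Fin d → ℕ) (t : ℝ), 0 < t → 0 < Ffun β f z t)
    -- and the inequality holds
    (hineq : ∀ (z : Fin d → ℕ) (t : ℝ), 0 < t →
      0 ≤ ∑ i, (z i : ℝ) * (Ffun β f z t - FfunDown β f z t i) +
          ∑ i, ((z i : ℝ) + β i) *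
            (Ffun β f z t - Ffun β f (Function.update z i (z i + 1)) t)) :
    ∀ (r : ℝ), 0 < r → ∀ lam ∈ posOrthant d,
      ∃ ε > (0 : ℝ),
        (∑' z : Fin d → ℕ,
          ⨆ t ∈ Set.Icc (r - ε) (r + ε),
            ENNReal.ofReal (|Real.log (Ffun β f z t)| * ((∑ i, (z i : ℝ)) + 1) *
              ∏ i, (t * lam i) ^ (z i) * Real.exp (-(t * lam i)) / (Nat.factorial (z i))))
          < ⊤ ∧
        (∑' z : Fin d → ℕ,
          ENNReal.ofReal (|Real.log (Ffun β f z r)| *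
            ∏ i, (r * lam i) ^ (z i) * Real.exp (-(r * lam i)) / (Nat.factorial (z i))))
          < ⊤ :=
  summability_of_log_F_general d β hβ f hf_nonneg hfin hpos hineq
end
end
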